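/- Let b > 0 be real and let k be a positive integer, and set a = k·b. Then there exist compact sets K ⊆ A and L ⊆ B satisfying conditions Rh1–Rh3 of the standard rectangle setup. -/
import Mathlib


open MeasureTheory Real Set

/-- The square `A = [0,b] × [0,b]` of the standard rectangle setup. -/
def sqA (b : ℝ) : Set (ℝ × ℝ) := Set.Icc 0 b ×ˢ Set.Icc 0 b

/-- The rectangle `B = [b−a, 0] × [0,b]` of the standard rectangle setup. -/
def recB (a b : ℝ) : Set (ℝ × ℝ) := Set.Icc (b - a) 0 ×ˢ Set.Icc 0 b

/-- `τ(x,y) = (b−y, b−x)`, the reflection in the line `x + y = b`. -/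
def tauMap (b : ℝ) : ℝ × ℝ → ℝ × ℝ := fun p => (b - p.2, b - p.1)

/-- `ρ(x,y) = (b−a−x, b−y)`, the half-turn about the center of `B`. -/
def rhoMap (a b : ℝ) : ℝ × ℝ → ℝ × ℝ := fun p => (b - a - p.1, b - p.2)

/-- `σ(x,y) = (2b−a−x, y)`, the reflection in the vertical bisector of `A ∪ B`. -/
def sigmaMap (a b : ℝ) : ℝ × ℝ → ℝ × ℝ := fun p => (2 * b - a - p.1, p.2)

/-- Compact sets `K ⊆ A` and `L ⊆ B` satisfying conditions Rh1–Rh3 of the standard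
rectangle setup: (Rh1) `K ∪ τ(K) = A` with `K ∩ τ(K)` of measure zero;
(Rh2) `L ∪ ρ(L) = B` with `L ∩ ρ(L)` of measure zero; (Rh3) `σ(K ∪ L) = K ∪ L`. -/
def RhKL (a b : ℝ) (K L : Set (ℝ × ℝ)) : Prop :=
  IsCompact K ∧ IsCompact L ∧ K ⊆ sqA b ∧ L ⊆ recB a b ∧
  K ∪ tauMap b '' K = sqA b ∧ volume (K ∩ tauMap b '' K) = 0 ∧
  L ∪ rhoMap a b '' L = recB a b ∧ volume (L ∩ rhoMap a b '' L) = 0 ∧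
  sigmaMap a b '' (K ∪ L) = K ∪ L

noncomputable def fE (b x : ℝ) : ℝ := (2 * b / π) * arcsin |sin (π * x / (2 * b))|

lemma abs_sin_add_int_mul_pi (θ : ℝ) (n : ℤ) : |sin (θ + n * π)| = |sin θ| := by
  rw [sin_add, sin_int_mul_pi, mul_zero, add_zero, abs_mul, Real.abs_cos_int_mul_pi, mul_one]

lemma arcsin_abs_cos (θ : ℝ) : arcsin |cos θ| = π / 2 - arcsin |sin θ| := by
  have hπ := pi_pos
  have hA0 : 0 ≤ arcsin |sin θ| := arcsin_nonneg.2 (abs_nonneg _)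
  have hA1 : arcsin |sin θ| ≤ π / 2 := arcsin_le_pi_div_two _
  have hsin : sin (π / 2 - arcsin |sin θ|) = |cos θ| := by
    rw [sin_pi_div_two_sub, cos_arcsin, sq_abs]
    have h : 1 - sin θ ^ 2 = cos θ ^ 2 := by nlinarith [sin_sq_add_cos_sq θ]
    rw [h, sqrt_sq_eq_abs]
  rw [← hsin, arcsin_sin (by linarith) (by linarith)]

section fE
variable {b : ℝ}

lemma fE_nonneg (hb : 0 < b) (x : ℝ) : 0 ≤ fE b x :=
  mul_nonneg (by positivity) (arcsin_nonneg.2 (abs_nonneg _))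

lemma fE_le (hb : 0 < b) (x : ℝ) : fE b x ≤ b := by
  have h1 : arcsin |sin (π * x / (2 * b))| ≤ π / 2 := arcsin_le_pi_div_two _
  have hπ := pi_pos
  calc (2 * b / π) * arcsin |sin (π * x / (2 * b))| ≤ (2 * b / π) * (π / 2) := by
        apply mul_le_mul_of_nonneg_left h1 (by positivity)
    _ = b := by field_simp

lemma fE_eq_self (hb : 0 < b) {x : ℝ} (h0 : 0 ≤ x) (h1 : x ≤ b) : fE b x = x := by
  have hπ := pi_pos
  set θ := π * x / (2 * b) with hθ
  have hθ0 : 0 ≤ θ := by positivity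
  have hθ1 : θ ≤ π / 2 := by
    rw [hθ, div_le_iff₀ (by positivity)]
    calc π * x ≤ π * b := by nlinarith
      _ = π / 2 * (2 * b) := by ring
  have hs : 0 ≤ sin θ := sin_nonneg_of_nonneg_of_le_pi hθ0 (by linarith)
  rw [fE, ← hθ, abs_of_nonneg hs, arcsin_sin (by linarith) hθ1, hθ]
  field_simp

lemma fE_neg (x : ℝ) : fE b (-x) = fE b x := by
  have h : π * (-x) / (2 * b) = -(π * x / (2 * b)) := by ring
  rw [fE, h, sin_neg, abs_neg]; rfl

lemma fE_period (hb : 0 < b) (x : ℝ) (n : ℤ) : fE b (x + 2 * b * n) = fE b x := by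
  have h : π * (x + 2 * b * n) / (2 * b) = π * x / (2 * b) + n * π := by
    field_simp
  rw [fE, h, abs_sin_add_int_mul_pi]; rfl

lemma fE_reflect (hb : 0 < b) (x : ℝ) : fE b (b - x) = b - fE b x := by
  have hπ := pi_pos
  have h : π * (b - x) / (2 * b) = π / 2 - π * x / (2 * b) := by field_simp
  rw [fE, h, sin_pi_div_two_sub, arcsin_abs_cos, fE]
  field_simp

lemma fE_int_even (hb : 0 < b) {j : ℤ} (hj : Even j) (x : ℝ) :
    fE b (j * b - x) = fE b x := by
  obtain ⟨i, hi⟩ := hj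
  have h : (j : ℝ) * b - x = -x + 2 * b * i := by
    have h2 : (j : ℝ) = 2 * i := by rw [hi]; push_cast; ring
    rw [h2]; ring
  rw [h, fE_period hb, fE_neg]

lemma fE_int_odd (hb : 0 < b) {j : ℤ} (hj : Odd j) (x : ℝ) :
    fE b (j * b - x) = b - fE b x := by
  obtain ⟨i, hi⟩ := hj
  have h : (j : ℝ) * b - x = (b - x) + 2 * b * i := by
    have h2 : (j : ℝ) = 2 * i + 1 := by rw [hi]; push_cast; ring
    rw [h2]; ring
  rw [h, fE_period hb, fE_reflect hb]

lemma continuous_fE : Continuous (fE b) := by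
  unfold fE
  exact continuous_const.mul (Real.continuous_arcsin.comp ((continuous_sin.comp (by continuity)).abs))

end fE

lemma nullGraph {g : ℝ → ℝ} (hg : Continuous g) : volume {p : ℝ × ℝ | p.2 = g p.1} = 0 := by
  have hcl : IsClosed {p : ℝ × ℝ | p.2 = g p.1} :=
    isClosed_eq continuous_snd (hg.comp continuous_fst)
  rw [MeasureTheory.Measure.volume_eq_prod, MeasureTheory.Measure.prod_apply hcl.measurableSet]
  have h : ∀ x : ℝ, (volume (Prod.mk x ⁻¹' {p : ℝ × ℝ | p.2 = g p.1})) = 0 := by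
    intro x
    have h2 : (Prod.mk x ⁻¹' {p : ℝ × ℝ | p.2 = g p.1}) = {g x} := by
      ext y; simp [eq_comm]
    rw [h2]; exact measure_singleton _
  simp [h]

lemma nullVert {Z : Set ℝ} (hZ : Z.Countable) : volume {p : ℝ × ℝ | p.1 ∈ Z} = 0 := by
  have h : {p : ℝ × ℝ | p.1 ∈ Z} = Z ×ˢ (univ : Set ℝ) := by ext p; simp
  rw [h, MeasureTheory.Measure.volume_eq_prod, MeasureTheory.Measure.prod_prod,
    hZ.measure_zero, zero_mul]


lemma tau_image (b : ℝ) (S : Set (ℝ × ℝ)) : tauMap b '' S = tauMap b ⁻¹' S := by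
  have h : ∀ p, tauMap b (tauMap b p) = p := by intro p; simp [tauMap]
  exact congrFun (Set.image_eq_preimage_of_inverse h h) S

lemma rho_image (a b : ℝ) (S : Set (ℝ × ℝ)) : rhoMap a b '' S = rhoMap a b ⁻¹' S := by
  have h : ∀ p, rhoMap a b (rhoMap a b p) = p := by intro p; simp [rhoMap]
  exact congrFun (Set.image_eq_preimage_of_inverse h h) S

lemma sigma_image (a b : ℝ) (S : Set (ℝ × ℝ)) : sigmaMap a b '' S = sigmaMap a b ⁻¹' S := by
  have h : ∀ p, sigmaMap a b (sigmaMap a b p) = p := by intro p; simp [sigmaMap]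
  exact congrFun (Set.image_eq_preimage_of_inverse h h) S

lemma mem_sqA (b : ℝ) (p : ℝ × ℝ) :
    p ∈ sqA b ↔ (0 ≤ p.1 ∧ p.1 ≤ b) ∧ (0 ≤ p.2 ∧ p.2 ≤ b) := by
  simp [sqA, Set.mem_Icc, Prod.le_def, and_assoc]; tauto

lemma mem_recB (a b : ℝ) (p : ℝ × ℝ) :
    p ∈ recB a b ↔ (b - a ≤ p.1 ∧ p.1 ≤ 0) ∧ (0 ≤ p.2 ∧ p.2 ≤ b) := by
  simp [recB, Set.mem_Icc, Prod.le_def, and_assoc]; tauto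

lemma isCompact_sqA (b : ℝ) : IsCompact (sqA b) := isCompact_Icc.prod isCompact_Icc
lemma isCompact_recB (a b : ℝ) : IsCompact (recB a b) := isCompact_Icc.prod isCompact_Icc
lemma isClosed_sqA (b : ℝ) : IsClosed (sqA b) := isClosed_Icc.prod isClosed_Icc
lemma isClosed_recB (a b : ℝ) : IsClosed (recB a b) := isClosed_Icc.prod isClosed_Icc

/-! ## Even case -/

noncomputable def Kev (b : ℝ) : Set (ℝ × ℝ) := {p | p ∈ sqA b ∧ p.2 ≤ b - fE b p.1}
noncomputable def Lev (a b : ℝ) : Set (ℝ × ℝ) := {p | p ∈ recB a b ∧ p.2 ≤ b - fE b p.1}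

lemma isClosed_cond (b : ℝ) : IsClosed {p : ℝ × ℝ | p.2 ≤ b - fE b p.1} :=
  isClosed_le continuous_snd (continuous_const.sub (continuous_fE.comp continuous_fst))

lemma rh_even (b : ℝ) (hb : 0 < b) (k : ℕ) (hk : 0 < k) (hke : Even k) :
    RhKL ((k : ℝ) * b) b (Kev b) (Lev ((k : ℝ) * b) b) := by
  have hk1 : (1 : ℝ) ≤ (k : ℝ) := by exact_mod_cast hk
  have hfa : ∀ x : ℝ, fE b ((b - (k : ℝ) * b) - x) = b - fE b x := by
    intro x
    have hodd : Odd (1 - (k : ℤ)) := by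
      obtain ⟨m, hm⟩ := hke
      exact ⟨-(m : ℤ), by push_cast [hm]; ring⟩
    have h := fE_int_odd hb hodd x
    have he : ((1 - (k : ℤ) : ℤ) : ℝ) * b - x = (b - (k : ℝ) * b) - x := by push_cast; ring
    rwa [he] at h
  have hfs : ∀ x : ℝ, fE b ((2 * b - (k : ℝ) * b) - x) = fE b x := by
    intro x
    have hev : Even (2 - (k : ℤ)) := by
      obtain ⟨m, hm⟩ := hke
      exact ⟨1 - (m : ℤ), by push_cast [hm]; ring⟩
    have h := fE_int_even hb hev x
    have he : ((2 - (k : ℤ) : ℤ) : ℝ) * b - x = (2 * b - (k : ℝ) * b) - x := by push_cast; ring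
    rwa [he] at h
  have hKsub : Kev b ⊆ sqA b := fun p hp => hp.1
  have hLsub : Lev ((k : ℝ) * b) b ⊆ recB ((k : ℝ) * b) b := fun p hp => hp.1
  have hKcomp : IsCompact (Kev b) :=
    (isCompact_sqA b).of_isClosed_subset ((isClosed_sqA b).inter (isClosed_cond b)) hKsub
  have hLcomp : IsCompact (Lev ((k : ℝ) * b) b) :=
    (isCompact_recB _ b).of_isClosed_subset ((isClosed_recB _ b).inter (isClosed_cond b)) hLsub
  refine ⟨hKcomp, hLcomp, hKsub, hLsub, ?_, ?_, ?_, ?_, ?_⟩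
  · -- Rh1 union
    rw [tau_image]
    ext p
    simp only [Set.mem_union, Set.mem_preimage, Kev, Set.mem_setOf_eq, mem_sqA, tauMap]
    constructor
    · rintro (⟨h, _⟩ | ⟨h, _⟩)
      · exact h
      · exact ⟨⟨by linarith [h.1.1, h.1.2, h.2.1, h.2.2], by linarith [h.1.1, h.1.2, h.2.1, h.2.2]⟩,
               ⟨by linarith [h.1.1, h.1.2, h.2.1, h.2.2], by linarith [h.1.1, h.1.2, h.2.1, h.2.2]⟩⟩
    · rintro ⟨⟨hx0, hx1⟩, hy0, hy1⟩
      have hfx : fE b p.1 = p.1 := fE_eq_self hb hx0 hx1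
      rcases le_total p.2 (b - p.1) with h | h
      · left; exact ⟨⟨⟨hx0, hx1⟩, hy0, hy1⟩, by rw [hfx]; exact h⟩
      · right
        refine ⟨⟨⟨by linarith, by linarith⟩, by linarith, by linarith⟩, ?_⟩
        show b - p.1 ≤ b - fE b (b - p.2)
        rw [fE_eq_self hb (by linarith) (by linarith)]
        linarith
  · -- Rh1 null
    rw [tau_image]
    refine measure_mono_null ?_ (nullGraph (g := fun x => b - x) (by continuity))
    · rintro p ⟨⟨hpA, hpc⟩, hpre⟩
      simp only [Set.mem_preimage, Kev, Set.mem_setOf_eq, mem_sqA, tauMap] at hpre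
      rw [mem_sqA] at hpA
      obtain ⟨⟨hx0, hx1⟩, hy0, hy1⟩ := hpA
      have hfx : fE b p.1 = p.1 := fE_eq_self hb hx0 hx1
      have hfy : fE b (b - p.2) = b - p.2 := fE_eq_self hb (by linarith) (by linarith)
      obtain ⟨_, h2⟩ := hpre
      rw [hfy] at h2
      rw [hfx] at hpc
      show p.2 = b - p.1
      linarith
  · -- Rh2 union
    rw [rho_image]
    ext p
    simp only [Set.mem_union, Set.mem_preimage, Lev, Set.mem_setOf_eq, mem_recB, rhoMap]
    constructor
    · rintro (⟨h, _⟩ | ⟨h, _⟩)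
      · exact h
      · exact ⟨⟨by linarith [h.1.1, h.1.2, h.2.1, h.2.2], by linarith [h.1.1, h.1.2, h.2.1, h.2.2]⟩,
               ⟨by linarith [h.1.1, h.1.2, h.2.1, h.2.2], by linarith [h.1.1, h.1.2, h.2.1, h.2.2]⟩⟩
    · rintro ⟨⟨hx0, hx1⟩, hy0, hy1⟩
      rcases le_total p.2 (b - fE b p.1) with h | h
      · left; exact ⟨⟨⟨hx0, hx1⟩, hy0, hy1⟩, h⟩
      · right
        refine ⟨⟨⟨by linarith, by linarith⟩, by linarith, by linarith⟩, ?_⟩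
        show b - p.2 ≤ b - fE b (b - (k : ℝ) * b - p.1)
        have := hfa p.1
        have he : b - (k : ℝ) * b - p.1 = (b - (k : ℝ) * b) - p.1 := by ring
        rw [he, this]
        linarith
  · -- Rh2 null
    rw [rho_image]
    refine measure_mono_null ?_ (nullGraph (g := fun x => b - fE b x) (continuous_const.sub continuous_fE))
    · rintro p ⟨⟨_, hpc⟩, hpre⟩
      simp only [Set.mem_preimage, Lev, Set.mem_setOf_eq, mem_recB, rhoMap] at hpre
      obtain ⟨_, h2⟩ := hpre
      have he : b - (k : ℝ) * b - p.1 = (b - (k : ℝ) * b) - p.1 := by ring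
      rw [he, hfa p.1] at h2
      show p.2 = b - fE b p.1
      linarith
  · -- Rh3
    have hW : Kev b ∪ Lev ((k : ℝ) * b) b =
        {p : ℝ × ℝ | (b - (k : ℝ) * b ≤ p.1 ∧ p.1 ≤ b) ∧ (0 ≤ p.2 ∧ p.2 ≤ b) ∧
          p.2 ≤ b - fE b p.1} := by
      ext p
      simp only [Set.mem_union, Kev, Lev, Set.mem_setOf_eq, mem_sqA, mem_recB]
      constructor
      · rintro (⟨⟨⟨h1, h2⟩, h3, h4⟩, h5⟩ | ⟨⟨⟨h1, h2⟩, h3, h4⟩, h5⟩)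
        · exact ⟨⟨by nlinarith, h2⟩, ⟨h3, h4⟩, h5⟩
        · exact ⟨⟨h1, by linarith⟩, ⟨h3, h4⟩, h5⟩
      · rintro ⟨⟨h1, h2⟩, ⟨h3, h4⟩, h5⟩
        rcases le_total 0 p.1 with h | h
        · exact Or.inl ⟨⟨⟨h, h2⟩, h3, h4⟩, h5⟩
        · exact Or.inr ⟨⟨⟨h1, h⟩, h3, h4⟩, h5⟩
    rw [hW, sigma_image]
    ext p
    simp only [Set.mem_preimage, Set.mem_setOf_eq, sigmaMap]
    have he : 2 * b - (k : ℝ) * b - p.1 = (2 * b - (k : ℝ) * b) - p.1 := by ring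
    constructor
    · rintro ⟨⟨h1, h2⟩, ⟨h3, h4⟩, h5⟩
      rw [he, hfs p.1] at h5
      exact ⟨⟨by linarith, by linarith⟩, ⟨h3, h4⟩, h5⟩
    · rintro ⟨⟨h1, h2⟩, ⟨h3, h4⟩, h5⟩
      refine ⟨⟨by linarith, by linarith⟩, ⟨h3, h4⟩, ?_⟩
      show p.2 ≤ b - fE b (2 * b - (k : ℝ) * b - p.1)
      rw [he, hfs p.1]
      exact h5

/-! ## Odd case -/

lemma sin_two_pi_int (i : ℤ) : sin ((i:ℝ) * (2 * π)) = 0 := by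
  have h2 : ((i:ℝ)) * (2 * π) = ((2*i : ℤ) : ℝ) * π := by push_cast; ring
  rw [h2, sin_int_mul_pi]

lemma sin_int_even {j : ℤ} (hj : Even j) (θ : ℝ) : sin (-θ + j * π) = -sin θ := by
  obtain ⟨i, hi⟩ := hj
  have h : (-θ:ℝ) + j * π = -θ + i * (2 * π) := by rw [hi]; push_cast; ring
  rw [h, sin_add, Real.cos_int_mul_two_pi, sin_two_pi_int, sin_neg, mul_one, mul_zero, add_zero]

lemma sin_int_odd {j : ℤ} (hj : Odd j) (θ : ℝ) : sin (-θ + j * π) = sin θ := by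
  obtain ⟨i, hi⟩ := hj
  have h : (-θ : ℝ) + j * π = (-θ + π) + i * (2 * π) := by rw [hi]; push_cast; ring
  rw [h, sin_add, Real.cos_int_mul_two_pi, sin_two_pi_int, mul_one, mul_zero, add_zero,
    sin_add, sin_neg, cos_neg, Real.cos_pi, Real.sin_pi, mul_zero, add_zero]
  ring

noncomputable def sg (b x : ℝ) : ℝ := sin (π * x / b)
noncomputable def mS (b x : ℝ) : ℝ := min (fE b x) (b - fE b x)
noncomputable def MS (b x : ℝ) : ℝ := max (fE b x) (b - fE b x)

def Cnd (b : ℝ) (p : ℝ × ℝ) : Prop :=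
  (0 ≤ sg b p.1 ∧ (p.2 ≤ mS b p.1 ∨ MS b p.1 ≤ p.2)) ∨
  (sg b p.1 ≤ 0 ∧ mS b p.1 ≤ p.2 ∧ p.2 ≤ MS b p.1)

section odd
variable {b : ℝ}

lemma continuous_sg : Continuous (sg b) := by
  unfold sg; continuity

lemma continuous_mS : Continuous (mS b) :=
  continuous_fE.min (continuous_const.sub continuous_fE)

lemma continuous_MS : Continuous (MS b) :=
  continuous_fE.max (continuous_const.sub continuous_fE)

lemma mS_add_MS (x : ℝ) : mS b x + MS b x = b := by
  rw [mS, MS, min_add_max]; ring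

lemma mS_flip {x y : ℝ} (h : fE b y = b - fE b x) : mS b y = mS b x := by
  rw [mS, mS, h]; rw [show b - (b - fE b x) = fE b x by ring, min_comm]

lemma MS_flip {x y : ℝ} (h : fE b y = b - fE b x) : MS b y = MS b x := by
  rw [MS, MS, h]; rw [show b - (b - fE b x) = fE b x by ring, max_comm]

lemma sg_nonneg (hb : 0 < b) {x : ℝ} (h0 : 0 ≤ x) (h1 : x ≤ b) : 0 ≤ sg b x := by
  apply sin_nonneg_of_nonneg_of_le_pi (by positivity)
  rw [div_le_iff₀ hb]
  nlinarith [pi_pos]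

lemma sg_int_even (hb : 0 < b) {j : ℤ} (hj : Even j) (x : ℝ) :
    sg b ((j : ℝ) * b - x) = -sg b x := by
  have h : π * ((j : ℝ) * b - x) / b = -(π * x / b) + j * π := by field_simp; ring
  rw [sg, h, sin_int_even hj]; rfl

lemma sg_int_odd (hb : 0 < b) {j : ℤ} (hj : Odd j) (x : ℝ) :
    sg b ((j : ℝ) * b - x) = sg b x := by
  have h : π * ((j : ℝ) * b - x) / b = -(π * x / b) + j * π := by field_simp; ring
  rw [sg, h, sin_int_odd hj]; rfl

lemma sg_zero (hb : 0 < b) {x : ℝ} (h0 : 0 ≤ x) (h1 : x ≤ b) (hs : sg b x = 0) :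
    x = 0 ∨ x = b := by
  obtain ⟨n, hn⟩ := sin_eq_zero_iff.1 hs
  have hπ := pi_pos
  have hb' : b ≠ 0 := ne_of_gt hb
  have hπ' : π ≠ 0 := ne_of_gt hπ
  rw [eq_div_iff hb'] at hn
  have hx : x = n * b := by
    have h2 : π * x = π * ((n : ℝ) * b) := by linarith
    exact mul_left_cancel₀ hπ' h2
  have hn0 : (0 : ℤ) ≤ n := by
    by_contra hc
    push_neg at hc
    have : (n : ℝ) ≤ -1 := by exact_mod_cast Int.le_sub_one_of_lt hc
    nlinarith
  have hn1 : n ≤ 1 := by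
    by_contra hc
    push_neg at hc
    have : (2 : ℝ) ≤ (n : ℝ) := by exact_mod_cast hc
    nlinarith
  interval_cases n
  · left; simpa using hx
  · right; simpa using hx

lemma sg_zero_countable (hb : 0 < b) : {x : ℝ | sg b x = 0}.Countable := by
  have hπ := pi_pos
  have h : {x : ℝ | sg b x = 0} ⊆ Set.range (fun n : ℤ => (n : ℝ) * b) := by
    intro x hx
    obtain ⟨n, hn⟩ := sin_eq_zero_iff.1 hx
    refine ⟨n, ?_⟩
    have hb' : b ≠ 0 := ne_of_gt hb
    have hπ' : π ≠ 0 := ne_of_gt hπ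
    rw [eq_div_iff hb'] at hn
    have h2 : π * ((n:ℝ) * b) = π * x := by linarith
    exact mul_left_cancel₀ hπ' h2
  exact Set.Countable.mono h (Set.countable_range _)

lemma isClosed_Cnd : IsClosed {p : ℝ × ℝ | Cnd b p} := by
  have h : {p : ℝ × ℝ | Cnd b p} =
      (({p : ℝ × ℝ | 0 ≤ sg b p.1} ∩
        ({p : ℝ × ℝ | p.2 ≤ mS b p.1} ∪ {p : ℝ × ℝ | MS b p.1 ≤ p.2})) ∪
       ({p : ℝ × ℝ | sg b p.1 ≤ 0} ∩
        ({p : ℝ × ℝ | mS b p.1 ≤ p.2} ∩ {p : ℝ × ℝ | p.2 ≤ MS b p.1}))) := by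
    ext p; simp only [Cnd, Set.mem_union, Set.mem_inter_iff, Set.mem_setOf_eq]
  rw [h]
  have c1 : Continuous fun p : ℝ × ℝ => sg b p.1 :=
    continuous_sg.comp continuous_fst
  have c2 : Continuous fun p : ℝ × ℝ => mS b p.1 :=
    continuous_mS.comp continuous_fst
  have c3 : Continuous fun p : ℝ × ℝ => MS b p.1 :=
    continuous_MS.comp continuous_fst
  exact ((isClosed_le continuous_const c1).inter
      ((isClosed_le continuous_snd c2).union (isClosed_le c3 continuous_snd))).union
    ((isClosed_le c1 continuous_const).inter
      ((isClosed_le c2 continuous_snd).inter (isClosed_le continuous_snd c3)))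

end odd

noncomputable def Kod (b : ℝ) : Set (ℝ × ℝ) := {p | p ∈ sqA b ∧ Cnd b p}
noncomputable def Lod (a b : ℝ) : Set (ℝ × ℝ) := {p | p ∈ recB a b ∧ Cnd b p}

lemma rh_odd (b : ℝ) (hb : 0 < b) (k : ℕ) (hk : 0 < k) (hko : Odd k) :
    RhKL ((k : ℝ) * b) b (Kod b) (Lod ((k : ℝ) * b) b) := by
  have hk1 : (1 : ℝ) ≤ (k : ℝ) := by exact_mod_cast hk
  have hba : b - (k : ℝ) * b ≤ 0 := by nlinarith
  obtain ⟨m, hm⟩ := hko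
  -- transformation identities
  have hfa : ∀ x : ℝ, fE b (b - (k : ℝ) * b - x) = fE b x := by
    intro x
    have hev : Even (1 - (k : ℤ)) := ⟨-(m : ℤ), by push_cast [hm]; ring⟩
    have h := fE_int_even hb hev x
    have he : ((1 - (k : ℤ) : ℤ) : ℝ) * b - x = b - (k : ℝ) * b - x := by push_cast; ring
    rwa [he] at h
  have hsa : ∀ x : ℝ, sg b (b - (k : ℝ) * b - x) = -sg b x := by
    intro x
    have hev : Even (1 - (k : ℤ)) := ⟨-(m : ℤ), by push_cast [hm]; ring⟩
    have h := sg_int_even hb hev x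
    have he : ((1 - (k : ℤ) : ℤ) : ℝ) * b - x = b - (k : ℝ) * b - x := by push_cast; ring
    rwa [he] at h
  have hfs : ∀ x : ℝ, fE b (2 * b - (k : ℝ) * b - x) = b - fE b x := by
    intro x
    have hod : Odd (2 - (k : ℤ)) := ⟨-(m : ℤ), by push_cast [hm]; ring⟩
    have h := fE_int_odd hb hod x
    have he : ((2 - (k : ℤ) : ℤ) : ℝ) * b - x = 2 * b - (k : ℝ) * b - x := by push_cast; ring
    rwa [he] at h
  have hss : ∀ x : ℝ, sg b (2 * b - (k : ℝ) * b - x) = sg b x := by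
    intro x
    have hod : Odd (2 - (k : ℤ)) := ⟨-(m : ℤ), by push_cast [hm]; ring⟩
    have h := sg_int_odd hb hod x
    have he : ((2 - (k : ℤ) : ℤ) : ℝ) * b - x = 2 * b - (k : ℝ) * b - x := by push_cast; ring
    rwa [he] at h
  have hma : ∀ x : ℝ, mS b (b - (k : ℝ) * b - x) = mS b x := by
    intro x; rw [mS, mS, hfa x]
  have hMa : ∀ x : ℝ, MS b (b - (k : ℝ) * b - x) = MS b x := by
    intro x; rw [MS, MS, hfa x]
  have hms : ∀ x : ℝ, mS b (2 * b - (k : ℝ) * b - x) = mS b x := fun x => mS_flip (hfs x)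
  have hMs : ∀ x : ℝ, MS b (2 * b - (k : ℝ) * b - x) = MS b x := fun x => MS_flip (hfs x)
  have hmM : ∀ x : ℝ, mS b x + MS b x = b := mS_add_MS
  have hm0 : ∀ x : ℝ, 0 ≤ mS b x := fun x =>
    le_min (fE_nonneg hb x) (by linarith [fE_le hb x])
  have hM1 : ∀ x : ℝ, MS b x ≤ b := fun x =>
    max_le (fE_le hb x) (by linarith [fE_nonneg hb x])
  have hKsub : Kod b ⊆ sqA b := fun p hp => hp.1
  have hLsub : Lod ((k : ℝ) * b) b ⊆ recB ((k : ℝ) * b) b := fun p hp => hp.1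
  have hKcomp : IsCompact (Kod b) :=
    (isCompact_sqA b).of_isClosed_subset ((isClosed_sqA b).inter isClosed_Cnd) hKsub
  have hLcomp : IsCompact (Lod ((k : ℝ) * b) b) :=
    (isCompact_recB _ b).of_isClosed_subset ((isClosed_recB _ b).inter isClosed_Cnd) hLsub
  refine ⟨hKcomp, hLcomp, hKsub, hLsub, ?_, ?_, ?_, ?_, ?_⟩
  · -- Rh1 union
    rw [tau_image]
    ext p
    simp only [Set.mem_union, Set.mem_preimage, Kod, Set.mem_setOf_eq, mem_sqA, tauMap]
    constructor
    · rintro (⟨h, _⟩ | ⟨h, _⟩)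
      · exact h
      · exact ⟨⟨by linarith [h.1.1, h.1.2, h.2.1, h.2.2], by linarith [h.1.1, h.1.2, h.2.1, h.2.2]⟩,
               ⟨by linarith [h.1.1, h.1.2, h.2.1, h.2.2], by linarith [h.1.1, h.1.2, h.2.1, h.2.2]⟩⟩
    · rintro ⟨⟨hx0, hx1⟩, hy0, hy1⟩
      have hfx : fE b p.1 = p.1 := fE_eq_self hb hx0 hx1
      have hfy : fE b (b - p.2) = b - p.2 := fE_eq_self hb (by linarith) (by linarith)
      have hsx : 0 ≤ sg b p.1 := sg_nonneg hb hx0 hx1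
      have hsy : 0 ≤ sg b (b - p.2) := sg_nonneg hb (by linarith) (by linarith)
      rcases le_total p.2 p.1 with h1 | h1 <;> rcases le_total (p.1 + p.2) b with h2 | h2
      · left
        refine ⟨⟨⟨hx0, hx1⟩, hy0, hy1⟩, Or.inl ⟨hsx, Or.inl ?_⟩⟩
        rw [mS, hfx]; exact le_min (by linarith) (by linarith)
      · right
        refine ⟨⟨⟨by linarith, by linarith⟩, by linarith, by linarith⟩,
          Or.inl ⟨hsy, Or.inl ?_⟩⟩
        show b - p.1 ≤ mS b (b - p.2)
        rw [mS, hfy]; exact le_min (by linarith) (by linarith)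
      · right
        refine ⟨⟨⟨by linarith, by linarith⟩, by linarith, by linarith⟩,
          Or.inl ⟨hsy, Or.inr ?_⟩⟩
        show MS b (b - p.2) ≤ b - p.1
        rw [MS, hfy]; exact max_le (by linarith) (by linarith)
      · left
        refine ⟨⟨⟨hx0, hx1⟩, hy0, hy1⟩, Or.inl ⟨hsx, Or.inr ?_⟩⟩
        rw [MS, hfx]; exact max_le (by linarith) (by linarith)
  · -- Rh1 null
    rw [tau_image]
    have hnull : volume ({p : ℝ × ℝ | p.2 = p.1} ∪ ({p : ℝ × ℝ | p.2 = b - p.1} ∪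
        ({p : ℝ × ℝ | p.1 ∈ ({0, b} : Set ℝ)} ∪ ({p : ℝ × ℝ | p.2 = (0 : ℝ)} ∪
         {p : ℝ × ℝ | p.2 = b})))) = 0 := by
      refine measure_union_null (nullGraph continuous_id) ?_
      refine measure_union_null (nullGraph (by continuity)) ?_
      refine measure_union_null (nullVert (Set.toFinite _).countable) ?_
      exact measure_union_null (nullGraph continuous_const) (nullGraph continuous_const)
    refine measure_mono_null ?_ hnull
    rintro p ⟨⟨hpA, hc⟩, hpre⟩
    simp only [Set.mem_preimage, Kod, Set.mem_setOf_eq, tauMap] at hpre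
    obtain ⟨hpAτ, hcτ⟩ := hpre
    rw [mem_sqA] at hpA
    obtain ⟨⟨hx0, hx1⟩, hy0, hy1⟩ := hpA
    have hfx : fE b p.1 = p.1 := fE_eq_self hb hx0 hx1
    have hfy : fE b (b - p.2) = b - p.2 := fE_eq_self hb (by linarith) (by linarith)
    have hsx : 0 ≤ sg b p.1 := sg_nonneg hb hx0 hx1
    have hsy : 0 ≤ sg b (b - p.2) := sg_nonneg hb (by linarith) (by linarith)
    simp only [Set.mem_union, Set.mem_setOf_eq, Set.mem_insert_iff, Set.mem_singleton_iff]
    rcases hc with ⟨hs1, hd1⟩ | ⟨hs1, _⟩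
    · rcases hcτ with ⟨hs2, hd2⟩ | ⟨hs2, _⟩
      · -- both first branches
        rw [mS, MS, hfx] at hd1
        have hd2' : b - p.1 ≤ min (b - p.2) (b - (b - p.2)) ∨
            max (b - p.2) (b - (b - p.2)) ≤ b - p.1 := by
          rcases hd2 with h | h
          · left; rw [mS, hfy] at h; exact h
          · right; rw [MS, hfy] at h; exact h
        rcases hd1 with h | h <;> rcases hd2' with h' | h'
        · obtain ⟨ha1, ha2⟩ := le_min_iff.1 h
          obtain ⟨hb1, hb2⟩ := le_min_iff.1 h'
          right; left; show p.2 = b - p.1; linarith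
        · obtain ⟨ha1, ha2⟩ := le_min_iff.1 h
          obtain ⟨hb1, hb2⟩ := max_le_iff.1 h'
          left; show p.2 = p.1; linarith
        · obtain ⟨ha1, ha2⟩ := max_le_iff.1 h
          obtain ⟨hb1, hb2⟩ := le_min_iff.1 h'
          left; show p.2 = p.1; linarith
        · obtain ⟨ha1, ha2⟩ := max_le_iff.1 h
          obtain ⟨hb1, hb2⟩ := max_le_iff.1 h'
          right; left; show p.2 = b - p.1; linarith
      · -- τ second branch : sg b (b - p.2) = 0
        have h0 : sg b (b - p.2) = 0 := le_antisymm hs2 hsy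
        rcases sg_zero hb (by linarith) (by linarith) h0 with h | h
        · right; right; right; right; show p.2 = b; linarith
        · right; right; right; left; show p.2 = 0; linarith
    · -- p second branch : sg b p.1 = 0
      have h0 : sg b p.1 = 0 := le_antisymm hs1 hsx
      rcases sg_zero hb hx0 hx1 h0 with h | h
      · right; right; left; left; exact h
      · right; right; left; right; exact h
  · -- Rh2 union
    rw [rho_image]
    ext p
    simp only [Set.mem_union, Set.mem_preimage, Lod, Set.mem_setOf_eq, mem_recB, rhoMap]
    constructor
    · rintro (⟨h, _⟩ | ⟨h, _⟩)
      · exact h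
      · exact ⟨⟨by linarith [h.1.1, h.1.2, h.2.1, h.2.2], by linarith [h.1.1, h.1.2, h.2.1, h.2.2]⟩,
               ⟨by linarith [h.1.1, h.1.2, h.2.1, h.2.2], by linarith [h.1.1, h.1.2, h.2.1, h.2.2]⟩⟩
    · rintro ⟨⟨hx0, hx1⟩, hy0, hy1⟩
      have hBmem : (b - (k : ℝ) * b ≤ b - (k : ℝ) * b - p.1 ∧ b - (k : ℝ) * b - p.1 ≤ 0) ∧
          (0 ≤ b - p.2 ∧ b - p.2 ≤ b) := ⟨⟨by linarith, by linarith⟩, by linarith, by linarith⟩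
      rcases le_total 0 (sg b p.1) with hs | hs
      · rcases le_total p.2 (mS b p.1) with h1 | h1
        · exact Or.inl ⟨⟨⟨hx0, hx1⟩, hy0, hy1⟩, Or.inl ⟨hs, Or.inl h1⟩⟩
        · rcases le_total (MS b p.1) p.2 with h2 | h2
          · exact Or.inl ⟨⟨⟨hx0, hx1⟩, hy0, hy1⟩, Or.inl ⟨hs, Or.inr h2⟩⟩
          · refine Or.inr ⟨hBmem, Or.inr ⟨?_, ?_, ?_⟩⟩
            · show sg b (b - (k : ℝ) * b - p.1) ≤ 0
              rw [hsa p.1]; linarith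
            · show mS b (b - (k : ℝ) * b - p.1) ≤ b - p.2
              rw [hma p.1]; linarith [hmM p.1]
            · show b - p.2 ≤ MS b (b - (k : ℝ) * b - p.1)
              rw [hMa p.1]; linarith [hmM p.1]
      · rcases le_total (mS b p.1) p.2 with h1 | h1
        · rcases le_total p.2 (MS b p.1) with h2 | h2
          · exact Or.inl ⟨⟨⟨hx0, hx1⟩, hy0, hy1⟩, Or.inr ⟨hs, h1, h2⟩⟩
          · refine Or.inr ⟨hBmem, Or.inl ⟨?_, Or.inl ?_⟩⟩
            · show 0 ≤ sg b (b - (k : ℝ) * b - p.1)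
              rw [hsa p.1]; linarith
            · show b - p.2 ≤ mS b (b - (k : ℝ) * b - p.1)
              rw [hma p.1]; linarith [hmM p.1]
        · refine Or.inr ⟨hBmem, Or.inl ⟨?_, Or.inr ?_⟩⟩
          · show 0 ≤ sg b (b - (k : ℝ) * b - p.1)
            rw [hsa p.1]; linarith
          · show MS b (b - (k : ℝ) * b - p.1) ≤ b - p.2
            rw [hMa p.1]; linarith [hmM p.1]
  · -- Rh2 null
    rw [rho_image]
    have hnull : volume ({p : ℝ × ℝ | p.1 ∈ {x : ℝ | sg b x = 0}} ∪
        ({p : ℝ × ℝ | p.2 = mS b p.1} ∪ {p : ℝ × ℝ | p.2 = MS b p.1})) = 0 := by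
      refine measure_union_null (nullVert (sg_zero_countable hb)) ?_
      exact measure_union_null (nullGraph continuous_mS) (nullGraph continuous_MS)
    refine measure_mono_null ?_ hnull
    rintro p ⟨⟨hpB, hc⟩, hpre⟩
    simp only [Set.mem_preimage, Lod, Set.mem_setOf_eq, rhoMap] at hpre
    obtain ⟨hpBρ, hcρ⟩ := hpre
    have hcρ' : Cnd b (b - (k : ℝ) * b - p.1, b - p.2) := hcρ
    unfold Cnd at hcρ'
    dsimp only at hcρ'
    clear hcρ
    simp only [Set.mem_union, Set.mem_setOf_eq]
    rcases hc with ⟨hs1, hd1⟩ | ⟨hs1, hd1⟩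
    · rcases hcρ' with ⟨hs2, _⟩ | ⟨_, hd2⟩
      · left
        show sg b p.1 = 0
        rw [show sg b (b - (k:ℝ)*b - p.1) = -sg b p.1 from hsa p.1] at hs2
        linarith
      · obtain ⟨hd2a, hd2b⟩ := hd2
        rw [hma p.1] at hd2a
        rw [hMa p.1] at hd2b
        rcases hd1 with h | h
        · right; left; show p.2 = mS b p.1; linarith [hmM p.1]
        · right; right; show p.2 = MS b p.1; linarith [hmM p.1]
    · rcases hcρ' with ⟨_, hd2⟩ | ⟨hs2, _⟩
      · rcases hd2 with h | h
        · rw [hma p.1] at h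
          right; right; show p.2 = MS b p.1; linarith [hmM p.1, hd1.1, hd1.2]
        · rw [hMa p.1] at h
          right; left; show p.2 = mS b p.1; linarith [hmM p.1, hd1.1, hd1.2]
      · left
        show sg b p.1 = 0
        rw [show sg b (b - (k:ℝ)*b - p.1) = -sg b p.1 from hsa p.1] at hs2
        linarith
  · -- Rh3
    have hW : Kod b ∪ Lod ((k : ℝ) * b) b =
        {p : ℝ × ℝ | (b - (k : ℝ) * b ≤ p.1 ∧ p.1 ≤ b) ∧ (0 ≤ p.2 ∧ p.2 ≤ b) ∧ Cnd b p} := by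
      ext p
      simp only [Set.mem_union, Kod, Lod, Set.mem_setOf_eq, mem_sqA, mem_recB]
      constructor
      · rintro (⟨⟨⟨h1, h2⟩, h3, h4⟩, h5⟩ | ⟨⟨⟨h1, h2⟩, h3, h4⟩, h5⟩)
        · exact ⟨⟨by linarith, h2⟩, ⟨h3, h4⟩, h5⟩
        · exact ⟨⟨h1, by linarith⟩, ⟨h3, h4⟩, h5⟩
      · rintro ⟨⟨h1, h2⟩, ⟨h3, h4⟩, h5⟩
        rcases le_total 0 p.1 with h | h
        · exact Or.inl ⟨⟨⟨h, h2⟩, h3, h4⟩, h5⟩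
        · exact Or.inr ⟨⟨⟨h1, h⟩, h3, h4⟩, h5⟩
    have hCσ : ∀ x y : ℝ, Cnd b (2 * b - (k : ℝ) * b - x, y) ↔ Cnd b (x, y) := by
      intro x y
      unfold Cnd
      dsimp only
      rw [hss x, hms x, hMs x]
    rw [hW, sigma_image]
    ext p
    simp only [Set.mem_preimage, Set.mem_setOf_eq, sigmaMap]
    constructor
    · rintro ⟨⟨h1, h2⟩, ⟨h3, h4⟩, h5⟩
      have h5' : Cnd b p := by
        have := (hCσ p.1 p.2).1 (by exact_mod_cast h5)
        simpa using this
      exact ⟨⟨by linarith, by linarith⟩, ⟨h3, h4⟩, h5'⟩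
    · rintro ⟨⟨h1, h2⟩, ⟨h3, h4⟩, h5⟩
      refine ⟨⟨by linarith, by linarith⟩, ⟨h3, h4⟩, ?_⟩
      show Cnd b (2 * b - (k : ℝ) * b - p.1, p.2)
      rw [hCσ p.1 p.2]
      simpa using h5

/-- For real `b > 0` and a positive integer `k`, with `a = k·b`, there
exist compact sets `K ⊆ A` and `L ⊆ B` satisfying conditions Rh1–Rh3 of the standard
rectangle setup. -/
theorem stmt_7 (b : ℝ) (hb : 0 < b) (k : ℕ) (hk : 0 < k) :
    ∃ K L : Set (ℝ × ℝ), RhKL ((k : ℝ) * b) b K L := by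
  rcases Nat.even_or_odd k with hke | hko
  · exact ⟨Kev b, Lev ((k : ℝ) * b) b, rh_even b hb k hk hke⟩
  · exact ⟨Kod b, Lod ((k : ℝ) * b) b, rh_odd b hb k hk hko⟩
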